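/- Under Assumptions 1, 2 and 3(b), the functional G is locally strongly convex around Γ_m, uniformly in the location parameter near m: there exists ε > 0 such that for every positive constant A there is a positive constant c_A such that for all V ∈ S(H) with ‖V − Γ_m‖_F ≤ A and all h ∈ ℝ^d with ‖h − m‖ ≤ ε, ⟨∇G_h(V) − ∇G_h(Γ_m), V − Γ_m⟩_F ≥ c_A ‖V − Γ_m‖_F². -/

import Mathlib

open MeasureTheory ProbabilityTheory Filter
open scoped ENNReal NNReal RealInnerProductSpace BigOperators

noncomputable section

/-- The space `S(H)` of `d × d` real matrices, viewed as a Euclidean space, so that its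
norm is the Frobenius norm and its inner product `⟪A, B⟫ = ∑ i j, A i j * B i j = tr (Aᵀ B)`
is the Frobenius inner product. -/
abbrev Mat (d : ℕ) := EuclideanSpace ℝ (Fin d × Fin d)

/-- `Y(h) = (x − h)(x − h)ᵀ`. -/
def Ymat {d : ℕ} (x h : EuclideanSpace ℝ (Fin d)) : Mat d :=
  (WithLp.equiv 2 _).symm (fun p => (x p.1 - h p.1) * (x p.2 - h p.2))

variable {d : ℕ} {Ω : Type*} [MeasurableSpace Ω]

/-- `G_h(V) = E[‖Y(h) − V‖_F − ‖Y(h)‖_F]`. -/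
def Gfun (P : Measure Ω) (X : Ω → EuclideanSpace ℝ (Fin d))
    (h : EuclideanSpace ℝ (Fin d)) (V : Mat d) : ℝ :=
  ∫ ω, (‖Ymat (X ω) h - V‖ - ‖Ymat (X ω) h‖) ∂P

/-- The gradient `∇G_h(V) = −E[(Y(h) − V)/‖Y(h) − V‖_F]`. -/
def gradG (P : Measure Ω) (X : Ω → EuclideanSpace ℝ (Fin d))
    (h : EuclideanSpace ℝ (Fin d)) (V : Mat d) : Mat d :=
  - ∫ ω, ‖Ymat (X ω) h - V‖⁻¹ • (Ymat (X ω) h - V) ∂P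

/-- The Hessian operator
`∇²G_h(V)(A) = E[(1/‖Y(h) − V‖_F)(A − ⟪Y(h) − V, A⟫_F (Y(h) − V)/‖Y(h) − V‖_F²)]`. -/
def hessG (P : Measure Ω) (X : Ω → EuclideanSpace ℝ (Fin d))
    (h : EuclideanSpace ℝ (Fin d)) (V : Mat d) (A : Mat d) : Mat d :=
  ∫ ω, ‖Ymat (X ω) h - V‖⁻¹ •
    (A - (‖Ymat (X ω) h - V‖ ^ 2)⁻¹ • (⟪Ymat (X ω) h - V, A⟫ • (Ymat (X ω) h - V))) ∂P

/-!
Write `V = Γ + r • w` with `‖w‖ = 1`. Along the segment `s ↦ Γ + s • w` the fundamental theorem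
of calculus turns `⟪∇G_h(V) − ∇G_h(Γ), V − Γ⟫` into `r ∫₀ʳ E[q(Y(h) − Γ − s • w, w)] ds`, where
`q(c, w) = (‖c‖²‖w‖² − ⟪c, w⟫²) / ‖c‖³` is the Hessian form of the norm; `q(c, w)` vanishes only
for `c ∈ ℝ w`. The inverse-square moment bound gives `P(‖Y(h) − v‖ ≤ δ) ≤ C δ²`, so `Y(h)` charges
no point and no line. Hence `E[min(q, 1)]` is positive and, by dominated convergence, continuous
in `(h, s, w)`; its minimum over the compact set `‖h − m‖ ≤ 1`, `0 ≤ s ≤ A`, `‖w‖ = 1` serves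
as `c_A`.
-/

open Set Topology

section NormHessForm

variable {E : Type*} [NormedAddCommGroup E] [InnerProductSpace ℝ E]

/-- For `c ≠ 0`, the Hessian quadratic form of the norm at `c` in the direction `w`
(its value `0` at `c = 0` is a junk value). -/
def normHessForm (c w : E) : ℝ := (‖c‖ ^ 2 * ‖w‖ ^ 2 - ⟪c, w⟫ ^ 2) / ‖c‖ ^ 3

lemma normHessForm_nonneg (c w : E) : 0 ≤ normHessForm c w := by
  have := abs_real_inner_le_norm c w
  refine div_nonneg ?_ (by positivity)
  nlinarith [abs_nonneg ⟪c, w⟫, sq_abs ⟪c, w⟫, norm_nonneg c, norm_nonneg w]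

lemma normHessForm_pos {c w : E} (hw : w ≠ 0) (hc : ∀ t : ℝ, c ≠ t • w) :
    0 < normHessForm c w := by
  have hc0 : c ≠ 0 := by simpa using hc 0
  have hlt : |⟪c, w⟫| < ‖c‖ * ‖w‖ := by
    refine (abs_real_inner_le_norm c w).lt_of_ne fun h => ?_
    obtain ⟨r, hr, rfl⟩ := (norm_inner_eq_norm_iff hc0 hw).1 (by rwa [Real.norm_eq_abs])
    exact hc r⁻¹ (by rw [smul_smul, inv_mul_cancel₀ hr, one_smul])
  refine div_pos ?_ (by positivity)
  nlinarith [abs_nonneg ⟪c, w⟫, sq_abs ⟪c, w⟫]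

lemma norm_min_normHessForm_one_le (c w : E) : ‖min (normHessForm c w) 1‖ ≤ 1 := by
  rw [Real.norm_eq_abs, abs_of_nonneg (le_min (normHessForm_nonneg c w) zero_le_one)]
  exact min_le_right _ _

lemma continuousAt_normHessForm {p : E × E} (hp : p.1 ≠ 0) :
    ContinuousAt (fun q : E × E => normHessForm q.1 q.2) p :=
  ContinuousAt.div (by fun_prop) (by fun_prop) (by positivity)

lemma continuousOn_normHessForm_sub_smul {b w : E} {S : Set ℝ}
    (hb : ∀ s ∈ S, b - s • w ≠ 0) : ContinuousOn (fun s : ℝ => normHessForm (b - s • w) w) S :=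
  fun s hs => ((continuousAt_normHessForm (p := (b - s • w, w)) (hb s hs)).comp
    (f := fun s : ℝ => (b - s • w, w)) (by fun_prop)).continuousWithinAt

lemma hasDerivAt_inner_normalize_sub_smul {b w : E} {s : ℝ} (hs : b - s • w ≠ 0) :
    HasDerivAt (fun t : ℝ => ⟪‖b - t • w‖⁻¹ • (b - t • w), w⟫)
      (-normHessForm (b - s • w) w) s := by
  have hline : HasDerivAt (fun t : ℝ => b - t • w) (-w) s := by
    simpa using ((hasDerivAt_id s).smul_const w).const_sub b
  have hinner : HasDerivAt (fun t : ℝ => ⟪b - t • w, w⟫) (-‖w‖ ^ 2) s := by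
    simpa [real_inner_self_eq_norm_sq] using hline.inner ℝ (hasDerivAt_const s w)
  have hnorm : HasDerivAt (fun t : ℝ => ‖b - t • w‖) (-⟪b - s • w, w⟫ / ‖b - s • w‖) s := by
    have := hline.norm_sq.sqrt (by positivity)
    simp only [Real.sqrt_sq (norm_nonneg _), inner_neg_right] at this
    convert this using 1
    field_simp
  have hfun : (fun t : ℝ => ⟪‖b - t • w‖⁻¹ • (b - t • w), w⟫) =
      fun t => ⟪b - t • w, w⟫ / ‖b - t • w‖ := by
    funext t
    rw [real_inner_smul_left, inv_mul_eq_div]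
  rw [hfun]
  refine (hinner.div hnorm (norm_ne_zero_iff.2 hs)).congr_deriv ?_
  have : ‖b - s • w‖ ≠ 0 := norm_ne_zero_iff.2 hs
  unfold normHessForm
  field_simp
  ring

lemma inner_normalize_sub_normalize_eq_integral {b w : E} {r : ℝ}
    (hb : ∀ s ∈ uIcc 0 r, b - s • w ≠ 0) :
    ⟪‖b‖⁻¹ • b - ‖b - r • w‖⁻¹ • (b - r • w), w⟫ =
      ∫ s in (0 : ℝ)..r, normHessForm (b - s • w) w := by
  have := intervalIntegral.integral_eq_sub_of_hasDerivAt
    (fun s hs => hasDerivAt_inner_normalize_sub_smul (hb s hs))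
    (continuousOn_normHessForm_sub_smul hb).neg.intervalIntegrable
  rw [intervalIntegral.integral_neg, zero_smul, sub_zero] at this
  rw [inner_sub_left]
  linarith

lemma mul_integral_min_normHessForm_le_inner {b w : E} {r : ℝ} (hr : 0 ≤ r)
    (hb : ∀ s ∈ uIcc 0 r, b - s • w ≠ 0) :
    r * ∫ s in (0 : ℝ)..r, min (normHessForm (b - s • w) w) 1 ≤
      ⟪‖b‖⁻¹ • b - ‖b - r • w‖⁻¹ • (b - r • w), r • w⟫ := by
  have hQ := continuousOn_normHessForm_sub_smul hb
  rw [real_inner_smul_right, inner_normalize_sub_normalize_eq_integral hb]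
  exact mul_le_mul_of_nonneg_left (intervalIntegral.integral_mono_on hr
    (hQ.inf continuousOn_const).intervalIntegrable hQ.intervalIntegrable
    fun s _ => min_le_left _ _) hr

end NormHessForm

lemma MeasureTheory.Measure.eq_zero_of_measure_Ico_le_sq {ν : Measure ℝ} {M : ℝ≥0∞}
    (hM : M ≠ ⊤) (h : ∀ a δ : ℝ, 0 < δ → ν (Ico a (a + δ)) ≤ M * ENNReal.ofReal δ ^ 2) :
    ν = 0 := by
  have hunit (a : ℝ) : ν (Ico a (a + 1)) = 0 := by
    have hN (N : ℕ) : ν (Ico a (a + 1)) ≤ M * ENNReal.ofReal (1 / (N + 1)) := by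
      set x : ℕ → ℝ := fun i => a + i * (1 / (N + 1))
      have hx (i : ℕ) : x (i + 1) = x i + 1 / (N + 1) := by simp only [x]; push_cast; ring
      have hcover : Ico a (a + 1) ⊆ ⋃ i ∈ Finset.range (N + 1), Ico (x i) (x (i + 1)) := by
        have hx0 : x 0 = a := by simp [x]
        have hxN : x (N + 1) = a + 1 := by simp only [x]; push_cast; field_simp
        simpa only [hx0, hxN] using Ico_subset_biUnion_Ico (N + 1) x
      calc ν (Ico a (a + 1))
          ≤ ∑ i ∈ Finset.range (N + 1), ν (Ico (x i) (x (i + 1))) :=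
            (measure_mono hcover).trans (measure_biUnion_finset_le _ _)
        _ ≤ ∑ _i ∈ Finset.range (N + 1), M * ENNReal.ofReal (1 / (N + 1)) ^ 2 :=
            Finset.sum_le_sum fun i _ => hx i ▸ h (x i) _ (by positivity)
        _ = M * ENNReal.ofReal (1 / (N + 1)) := by
            rw [Finset.sum_const, Finset.card_range, nsmul_eq_mul, ← ENNReal.ofReal_pow
              (by positivity), mul_left_comm, ← ENNReal.ofReal_natCast,
              ← ENNReal.ofReal_mul (by positivity)]
            congr 2
            field_simp
            push_cast
            ring
    have hlim : Tendsto (fun N : ℕ => M * ENNReal.ofReal (1 / (N + 1))) atTop (𝓝 0) := by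
      simpa using ENNReal.Tendsto.const_mul
        (ENNReal.tendsto_ofReal tendsto_one_div_add_atTop_nhds_zero_nat) (Or.inr hM)
    exact le_antisymm (ge_of_tendsto' hlim hN) bot_le
  rw [← Measure.measure_univ_eq_zero, ← iUnion_Ico_add_intCast (0 : ℝ)]
  exact measure_iUnion_null fun n => by simpa using hunit n

section InverseSquareMoment

variable {E : Type*} [NormedAddCommGroup E] [MeasurableSpace E] [BorelSpace E]
  {P : Measure Ω} {Y : Ω → E}

lemma measure_norm_sub_le_le_lintegral (hY : Measurable Y) (v : E) {δ : ℝ} (hδ : 0 < δ) :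
    P {ω | ‖Y ω - v‖ ≤ δ} ≤
      ENNReal.ofReal δ ^ 2 * ∫⁻ ω, ((‖Y ω - v‖₊ : ℝ≥0∞) ^ 2)⁻¹ ∂P := by
  have hδ' : (ENNReal.ofReal δ ^ 2)⁻¹ ≠ 0 := by simp
  have hδ'' : (ENNReal.ofReal δ ^ 2)⁻¹ ≠ ⊤ := by simp [hδ]
  have hmeas : AEMeasurable (fun ω => ((‖Y ω - v‖₊ : ℝ≥0∞) ^ 2)⁻¹) P := by
    fun_prop
  refine (measure_mono fun ω hω => ?_).trans
    ((meas_ge_le_lintegral_div hmeas hδ' hδ'').trans_eq ?_)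
  · show (ENNReal.ofReal δ ^ 2)⁻¹ ≤ ((‖Y ω - v‖₊ : ℝ≥0∞) ^ 2)⁻¹
    gcongr
    rw [← ENNReal.ofReal_coe_nnreal, coe_nnnorm]
    exact ENNReal.ofReal_le_ofReal hω
  · rw [ENNReal.div_eq_inv_mul, inv_inv, mul_comm]

lemma measure_eq_eq_zero_of_lintegral_inv_sq_ne_top (hY : Measurable Y) {v : E}
    (hv : ∫⁻ ω, ((‖Y ω - v‖₊ : ℝ≥0∞) ^ 2)⁻¹ ∂P ≠ ⊤) : P {ω | Y ω = v} = 0 := by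
  have hlim : Tendsto (fun δ : ℝ => ENNReal.ofReal δ ^ 2 * ∫⁻ ω, ((‖Y ω - v‖₊ : ℝ≥0∞) ^ 2)⁻¹ ∂P)
      (𝓝[>] 0) (𝓝 0) := by
    have : Tendsto (fun δ : ℝ => ENNReal.ofReal δ ^ 2) (𝓝[>] 0) (𝓝 0) := by
      have := ((ENNReal.continuous_pow 2).comp ENNReal.continuous_ofReal).tendsto 0
      simpa [Function.comp_def] using this.mono_left nhdsWithin_le_nhds
    simpa using ENNReal.Tendsto.mul_const this (Or.inr hv)
  refine le_antisymm (ge_of_tendsto hlim ?_) bot_le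
  filter_upwards [self_mem_nhdsWithin] with δ (hδ : 0 < δ)
  exact (measure_mono fun ω (hω : Y ω = v) => by simp [hω, hδ.le]).trans
    (measure_norm_sub_le_le_lintegral hY v hδ)

variable [InnerProductSpace ℝ E]

/-- The coordinate `T` along the line puts mass `O(δ²)` on every interval of length `δ`, so its
law on the line vanishes. -/
lemma measure_exists_eq_add_smul_eq_zero (hY : Measurable Y) {M : ℝ≥0∞} (hM : M ≠ ⊤)
    (hYM : ∀ v, ∫⁻ ω, ((‖Y ω - v‖₊ : ℝ≥0∞) ^ 2)⁻¹ ∂P ≤ M) (v : E) {w : E} (hw : ‖w‖ = 1) :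
    P {ω | ∃ t : ℝ, Y ω = v + t • w} = 0 := by
  set L := {ω | ∃ t : ℝ, Y ω = v + t • w}
  set T : Ω → ℝ := fun ω => ⟪Y ω - v, w⟫
  have hT : Measurable T := by fun_prop
  have hYL : ∀ ω ∈ L, Y ω = v + T ω • w := by
    rintro ω ⟨t, ht⟩
    simp [T, ht, real_inner_smul_left, hw]
  have hν : (P.restrict L).map T = 0 := by
    refine Measure.eq_zero_of_measure_Ico_le_sq hM fun a δ hδ => ?_
    rw [Measure.map_apply hT measurableSet_Ico, Measure.restrict_apply (hT measurableSet_Ico)]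
    refine (measure_mono fun ω (hω : ω ∈ T ⁻¹' Ico a (a + δ) ∩ L) => ?_).trans
      ((measure_norm_sub_le_le_lintegral hY (v + a • w) hδ).trans ?_)
    · have : Y ω - (v + a • w) = (T ω - a) • w := by rw [hYL ω hω.2, sub_smul]; abel
      show ‖Y ω - (v + a • w)‖ ≤ δ
      rw [this, norm_smul, hw, mul_one, Real.norm_eq_abs, abs_le]
      have := hω.1.1
      have := hω.1.2
      constructor <;> linarith
    · rw [mul_comm]
      gcongr
      exact hYM _
  simpa [Measure.map_apply hT MeasurableSet.univ] using congr_arg (· univ) hν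

end InverseSquareMoment

section TruncatedHessian

variable {E : Type*} [NormedAddCommGroup E] [InnerProductSpace ℝ E] [MeasurableSpace E]
  [BorelSpace E] [SecondCountableTopology E] {P : Measure Ω}

lemma measurable_normHessForm : Measurable fun q : E × E => normHessForm q.1 q.2 := by
  unfold normHessForm
  fun_prop

/-- Truncating at `1` bounds the integrand, which makes Fubini and dominated convergence
available. -/
def meanTruncHess (P : Measure Ω) (Y : Ω → E) (c w : E) : ℝ :=
  ∫ ω, min (normHessForm (Y ω - c) w) 1 ∂P

lemma integrable_min_normHessForm_sub [IsFiniteMeasure P] {Y : Ω → E} (hY : Measurable Y)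
    (c w : E) : Integrable (fun ω => min (normHessForm (Y ω - c) w) 1) P :=
  Integrable.of_bound ((measurable_normHessForm.comp ((hY.sub_const c).prodMk
    measurable_const)).min measurable_const).aestronglyMeasurable 1
    (Eventually.of_forall fun _ => norm_min_normHessForm_one_le _ _)

lemma continuous_meanTruncHess [IsFiniteMeasure P] {H : Type*} [TopologicalSpace H]
    [FirstCountableTopology H]
    {Y : H → Ω → E} (hYm : ∀ h, Measurable (Y h)) (hYc : ∀ ω, Continuous fun h => Y h ω)
    (hnull : ∀ h c, P {ω | Y h ω = c} = 0) :
    Continuous fun p : H × E × E => meanTruncHess P (Y p.1) p.2.1 p.2.2 := by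
  refine continuous_iff_continuousAt.2 fun p => continuousAt_of_dominated (bound := fun _ => 1)
    (Eventually.of_forall fun q => ?_)
    (Eventually.of_forall fun q => Eventually.of_forall fun ω => norm_min_normHessForm_one_le _ _)
    (integrable_const 1) ?_
  · exact (integrable_min_normHessForm_sub (hYm q.1) q.2.1 q.2.2).aestronglyMeasurable
  · have : ∀ᵐ ω ∂P, Y p.1 ω ≠ p.2.1 := ae_iff.2 (by simpa using hnull p.1 p.2.1)
    filter_upwards [this] with ω hω
    have hQ := continuousAt_normHessForm (p := (Y p.1 ω - p.2.1, p.2.2)) (sub_ne_zero.2 hω)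
    exact (hQ.comp (f := fun q : H × E × E => (Y q.1 ω - q.2.1, q.2.2))
      (by have := hYc ω; fun_prop)).min continuousAt_const

lemma meanTruncHess_pos [IsFiniteMeasure P] [NeZero P] {Y : Ω → E} (hY : Measurable Y)
    {c w : E} (hw : w ≠ 0) (hline : P {ω | ∃ t : ℝ, Y ω = c + t • w} = 0) :
    0 < meanTruncHess P Y c w := by
  rw [meanTruncHess, integral_pos_iff_support_of_nonneg
    (fun ω => le_min (normHessForm_nonneg _ _) zero_le_one)
    (integrable_min_normHessForm_sub hY c w), pos_iff_ne_zero]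
  intro h0
  refine NeZero.ne P (Measure.measure_univ_eq_zero.1
    (measure_mono_null (fun ω _ => ?_) (measure_union_null hline h0)))
  by_cases hω : ∃ t : ℝ, Y ω = c + t • w
  · exact Or.inl hω
  · refine Or.inr (ne_of_gt (lt_min (normHessForm_pos hw fun t ht => hω ⟨t, ?_⟩) one_pos))
    rw [← ht]
    abel

lemma integrable_spatialSign [IsFiniteMeasure P] {Y : Ω → E} (hY : Measurable Y) (v : E) :
    Integrable (fun ω => ‖Y ω - v‖⁻¹ • (Y ω - v)) P := by
  refine Integrable.of_bound (by fun_prop) 1 (Eventually.of_forall fun ω => ?_)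
  rcases eq_or_ne (Y ω - v) 0 with h | h
  · simp [h]
  · exact (norm_smul_inv_norm h).le

variable [CompleteSpace E]

def meanSpatialSign (P : Measure Ω) (Y : Ω → E) (v : E) : E :=
  ∫ ω, ‖Y ω - v‖⁻¹ • (Y ω - v) ∂P

/-- Integrate `mul_integral_min_normHessForm_le_inner` over `ω`, which is legitimate off the
null line through `Γ` in the direction `w`, and swap the integrals. -/
lemma mul_integral_meanTruncHess_le_inner [IsFiniteMeasure P] {Y : Ω → E} (hY : Measurable Y)
    {Γ w : E} (hline : P {ω | ∃ t : ℝ, Y ω = Γ + t • w} = 0) {r : ℝ} (hr : 0 ≤ r) :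
    r * ∫ s in (0 : ℝ)..r, meanTruncHess P Y (Γ + s • w) w ≤
      ⟪meanSpatialSign P Y Γ - meanSpatialSign P Y (Γ + r • w), r • w⟫ := by
  set f : ℝ → Ω → ℝ := fun s ω => min (normHessForm (Y ω - (Γ + s • w)) w) 1
  have hf_int : Integrable (Function.uncurry f) ((volume.restrict (uIoc 0 r)).prod P) := by
    rw [uIoc_of_le hr]
    refine Integrable.of_bound ?_ 1
      (Eventually.of_forall fun p => norm_min_normHessForm_one_le _ _)
    exact ((measurable_normHessForm.comp (((hY.comp measurable_snd).sub
      (measurable_const.add (measurable_fst.smul_const w))).prodMk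
      measurable_const)).min measurable_const).aestronglyMeasurable
  have hf_int' : Integrable (fun ω => ∫ s in (0 : ℝ)..r, f s ω) P := by
    simpa only [intervalIntegral.integral_of_le hr, uIoc_of_le hr, Function.uncurry_apply_pair]
      using hf_int.integral_prod_right
  have hsign := integrable_spatialSign (P := P) hY
  have hsub : Integrable (fun ω =>
      ‖Y ω - Γ‖⁻¹ • (Y ω - Γ) - ‖Y ω - (Γ + r • w)‖⁻¹ • (Y ω - (Γ + r • w))) P :=
    (hsign _).sub (hsign _)
  have hinner : ⟪meanSpatialSign P Y Γ - meanSpatialSign P Y (Γ + r • w), r • w⟫ =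
      ∫ ω, ⟪‖Y ω - Γ‖⁻¹ • (Y ω - Γ) - ‖Y ω - (Γ + r • w)‖⁻¹ • (Y ω - (Γ + r • w)), r • w⟫ ∂P := by
    rw [meanSpatialSign, meanSpatialSign, ← integral_sub (hsign _) (hsign _), real_inner_comm,
      ← integral_inner hsub]
    simp_rw [real_inner_comm (r • w)]
  have hpoint : ∀ᵐ ω ∂P, r * ∫ s in (0 : ℝ)..r, f s ω ≤
      ⟪‖Y ω - Γ‖⁻¹ • (Y ω - Γ) - ‖Y ω - (Γ + r • w)‖⁻¹ • (Y ω - (Γ + r • w)), r • w⟫ := by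
    have : ∀ᵐ ω ∂P, ¬ ∃ t : ℝ, Y ω = Γ + t • w := ae_iff.2 (by simpa using hline)
    filter_upwards [this] with ω hω
    simp only [f, ← sub_sub]
    exact mul_integral_min_normHessForm_le_inner hr fun s _ hs =>
      hω ⟨s, by rwa [sub_sub, sub_eq_zero] at hs⟩
  calc r * ∫ s in (0 : ℝ)..r, meanTruncHess P Y (Γ + s • w) w
      = ∫ ω, r * (∫ s in (0 : ℝ)..r, f s ω) ∂P := by
        rw [integral_const_mul, ← intervalIntegral_integral_swap hf_int]
        rfl
    _ ≤ _ := integral_mono_ae (hf_int'.const_mul r) (hsub.inner_const _) hpoint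
    _ = _ := hinner.symm

end TruncatedHessian

section StrongConvexity

variable {E : Type*} [NormedAddCommGroup E] [InnerProductSpace ℝ E] [FiniteDimensional ℝ E]
  [MeasurableSpace E] [BorelSpace E] {P : Measure Ω} [IsProbabilityMeasure P]

theorem exists_pos_mul_sq_le_inner_meanSpatialSign_sub {H : Type*} [TopologicalSpace H]
    [FirstCountableTopology H] {Y : H → Ω → E} (hYm : ∀ h, Measurable (Y h))
    (hYc : ∀ ω, Continuous fun h => Y h ω) {M : ℝ≥0∞} (hM : M ≠ ⊤)
    (hYM : ∀ h v, ∫⁻ ω, ((‖Y h ω - v‖₊ : ℝ≥0∞) ^ 2)⁻¹ ∂P ≤ M)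
    {K : Set H} (hK : IsCompact K) (Γ : E) (A : ℝ) :
    ∃ c > 0, ∀ h ∈ K, ∀ V, ‖V - Γ‖ ≤ A →
      c * ‖V - Γ‖ ^ 2 ≤ ⟪meanSpatialSign P (Y h) Γ - meanSpatialSign P (Y h) V, V - Γ⟫ := by
  have hline (h : H) (v : E) {w : E} (hw : ‖w‖ = 1) :
      P {ω | ∃ t : ℝ, Y h ω = v + t • w} = 0 :=
    measure_exists_eq_add_smul_eq_zero (hYm h) hM (hYM h) v hw
  have hcont : Continuous fun p : H × ℝ × E =>
      meanTruncHess P (Y p.1) (Γ + p.2.1 • p.2.2) p.2.2 :=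
    (continuous_meanTruncHess hYm hYc fun h c => measure_eq_eq_zero_of_lintegral_inv_sq_ne_top
      (hYm h) ((hYM h c).trans_lt hM.lt_top).ne).comp
      (f := fun p : H × ℝ × E => (p.1, Γ + p.2.1 • p.2.2, p.2.2)) (by fun_prop)
  have hKcpt : IsCompact (K ×ˢ Icc 0 A ×ˢ Metric.sphere (0 : E) 1) :=
    hK.prod (isCompact_Icc.prod (isCompact_sphere 0 1))
  obtain ⟨c, hc, hcK⟩ := hKcpt.exists_forall_le' hcont.continuousOn (a := 0) fun p hp => by
      have hw : ‖p.2.2‖ = 1 := by simpa using hp.2.2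
      exact meanTruncHess_pos (hYm p.1) (norm_ne_zero_iff.1 (by simp [hw])) (hline _ _ hw)
  refine ⟨c, hc, fun h hh V hV => ?_⟩
  obtain rfl | hVΓ := eq_or_ne V Γ
  · simp
  set r := ‖V - Γ‖
  set w := r⁻¹ • (V - Γ)
  have hr : 0 < r := norm_pos_iff.2 (sub_ne_zero.2 hVΓ)
  have hw : ‖w‖ = 1 := norm_smul_inv_norm (sub_ne_zero.2 hVΓ)
  have hrw : r • w = V - Γ := by simp [w, smul_smul, hr.ne']
  have hlower : r * c ≤ ∫ s in (0 : ℝ)..r, meanTruncHess P (Y h) (Γ + s • w) w := by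
    calc r * c = ∫ _ in (0 : ℝ)..r, c := by simp
      _ ≤ _ := intervalIntegral.integral_mono_on hr.le intervalIntegrable_const
          ((hcont.comp (by fun_prop : Continuous fun s : ℝ => (h, s, w))).intervalIntegrable _ _)
          fun s hs => hcK (h, s, w) ⟨hh, ⟨hs.1, hs.2.trans hV⟩, by simpa using hw⟩
  have := (mul_le_mul_of_nonneg_left hlower hr.le).trans
    (mul_integral_meanTruncHess_le_inner (hYm h) (hline h Γ hw) hr.le)
  rw [hrw, add_sub_cancel] at this
  linarith

end StrongConvexity

lemma continuous_Ymat {d : ℕ} :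
    Continuous fun q : EuclideanSpace ℝ (Fin d) × EuclideanSpace ℝ (Fin d) => Ymat q.1 q.2 :=
  (PiLp.continuous_toLp 2 _).comp (continuous_pi fun p => by fun_prop)

theorem stmt_14_general
    {d : ℕ} (P : Measure Ω) [IsProbabilityMeasure P]
    (X : Ω → EuclideanSpace ℝ (Fin d)) (hX : Measurable X)
    -- `m` is the geometric median of `X`: the unique minimizer of `u ↦ E[‖X − u‖ − ‖X‖]`
    (m : EuclideanSpace ℝ (Fin d))
    -- `Γ` is the median covariation matrix: the unique minimizer of `G_m`
    (Γ : Mat d)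
    -- Assumption 3(b)
    (C : ℝ)
    (hA3 : ∀ (h : EuclideanSpace ℝ (Fin d)) (V : Mat d),
      (∫⁻ ω, (‖Ymat (X ω) h - V‖₊ : ℝ≥0∞)⁻¹ ∂P) ≤ ENNReal.ofReal C ∧
      (∫⁻ ω, ((‖Ymat (X ω) h - V‖₊ : ℝ≥0∞) ^ 2)⁻¹ ∂P) ≤ ENNReal.ofReal C)
    :
    ∃ ε : ℝ, 0 < ε ∧ ∀ A : ℝ, 0 < A → ∃ cA : ℝ, 0 < cA ∧
      ∀ (V : Mat d) (h : EuclideanSpace ℝ (Fin d)), ‖V - Γ‖ ≤ A → ‖h - m‖ ≤ ε →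
        cA * ‖V - Γ‖ ^ 2 ≤ ⟪gradG P X h V - gradG P X h Γ, V - Γ⟫ := by
  have hYm (h : EuclideanSpace ℝ (Fin d)) : Measurable fun ω => Ymat (X ω) h :=
    (continuous_Ymat.comp (continuous_id.prodMk continuous_const)).measurable.comp hX
  have hYc (ω : Ω) : Continuous fun h => Ymat (X ω) h :=
    continuous_Ymat.comp (continuous_const.prodMk continuous_id)
  refine ⟨1, one_pos, fun A _ => ?_⟩
  obtain ⟨c, hc, hcK⟩ := exists_pos_mul_sq_le_inner_meanSpatialSign_sub (P := P) hYm hYc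
    ENNReal.ofReal_ne_top (fun h V => (hA3 h V).2) (isCompact_closedBall m 1) Γ A
  refine ⟨c, hc, fun V h hV hh => ?_⟩
  rw [gradG, gradG, neg_sub_neg]
  exact hcK h (mem_closedBall_iff_norm.2 hh) V hV

/-- Local strong convexity of `G` around `Γ_m`, uniformly in the location parameter around
`m` (Corollary B.1 of the paper): there is `ε > 0` such that for every `A > 0` there is
`c_A > 0` with `⟪∇G_h(V) − ∇G_h(Γ_m), V − Γ_m⟫_F ≥ c_A ‖V − Γ_m‖_F²` whenever
`‖V − Γ_m‖_F ≤ A` and `‖h − m‖ ≤ ε`. -/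
theorem stmt_14
    {d : ℕ} (hd : 1 ≤ d) (P : Measure Ω) [IsProbabilityMeasure P]
    (X : Ω → EuclideanSpace ℝ (Fin d)) (hX : Measurable X)
    -- `m` is the geometric median of `X`: the unique minimizer of `u ↦ E[‖X − u‖ − ‖X‖]`
    (m : EuclideanSpace ℝ (Fin d))
    (hm : ∀ u, (∫ ω, (‖X ω - m‖ - ‖X ω‖) ∂P) ≤ ∫ ω, (‖X ω - u‖ - ‖X ω‖) ∂P)
    (hm_unique : ∀ u, (∀ v, (∫ ω, (‖X ω - u‖ - ‖X ω‖) ∂P) ≤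
      ∫ ω, (‖X ω - v‖ - ‖X ω‖) ∂P) → u = m)
    -- `Γ` is the median covariation matrix: the unique minimizer of `G_m`
    (Γ : Mat d)
    (hΓ : ∀ V, Gfun P X m Γ ≤ Gfun P X m V)
    (hΓ_unique : ∀ V, (∀ W, Gfun P X m V ≤ Gfun P X m W) → V = Γ)
    -- Assumption 1
    (hA1 : ∃ u₁ u₂ : EuclideanSpace ℝ (Fin d), ‖u₁‖ = 1 ∧ ‖u₂‖ = 1 ∧
      LinearIndependent ℝ ![u₁, u₂] ∧
      0 < evariance (fun ω => ⟪u₁, X ω⟫) P ∧ 0 < evariance (fun ω => ⟪u₂, X ω⟫) P)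
    -- Assumption 2
    (hA2 : ∃ V₁ V₂ : Mat d, ‖V₁‖ = 1 ∧ ‖V₂‖ = 1 ∧ LinearIndependent ℝ ![V₁, V₂] ∧
      0 < evariance (fun ω => ⟪V₁, Ymat (X ω) m⟫) P ∧
      0 < evariance (fun ω => ⟪V₂, Ymat (X ω) m⟫) P)
    -- Assumption 3(b)
    (C : ℝ) (hC : 0 < C)
    (hA3 : ∀ (h : EuclideanSpace ℝ (Fin d)) (V : Mat d),
      (∫⁻ ω, (‖Ymat (X ω) h - V‖₊ : ℝ≥0∞)⁻¹ ∂P) ≤ ENNReal.ofReal C ∧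
      (∫⁻ ω, ((‖Ymat (X ω) h - V‖₊ : ℝ≥0∞) ^ 2)⁻¹ ∂P) ≤ ENNReal.ofReal C)
    :
    ∃ ε : ℝ, 0 < ε ∧ ∀ A : ℝ, 0 < A → ∃ cA : ℝ, 0 < cA ∧
      ∀ (V : Mat d) (h : EuclideanSpace ℝ (Fin d)), ‖V - Γ‖ ≤ A → ‖h - m‖ ≤ ε →
        cA * ‖V - Γ‖ ^ 2 ≤ ⟪gradG P X h V - gradG P X h Γ, V - Γ⟫ :=
  stmt_14_general P X hX m Γ C hA3
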